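/- For any unit vector ψ ∈ C^d ⊗ C^d with p = |ψ⟩⟨ψ|, the Schmidt-2 operator norm satisfies ‖1 ⊗ p + p ⊗ 1‖_{S(2)} ≤ 4 ‖p‖_{S(1)}, where ‖A‖_{S(k)} = sup over unit vectors χ of Schmidt rank ≤ k of ⟨χ, A χ⟩. -/

import Mathlib

/-!
Reshape `χ` into the matrix `X` across the cut (first factors | second factors) and write
`X = ∑_{t < rank X} u_t c_tᵀ` with unit vectors `u_t` and `∑_t ‖c_t‖² = ‖χ‖² = 1`.
Then `⟨χ, (1 ⊗ p) χ⟩ = ∑_r |⟨ψ, χ(r, ·)⟩|²`, and each `χ(r, ·)` is the sum of the product vectors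
`u_t(r₁, ·) ⊗ c_t(r₂, ·)`. Cauchy–Schwarz over `t` together with
`|⟨ψ, a ⊗ b⟩|² ≤ ‖p‖_{S(1)} ‖a‖² ‖b‖²` bounds this by `rank X · ‖p‖_{S(1)} ≤ 2 ‖p‖_{S(1)}`.
The term `p ⊗ 1` is the same quantity after swapping the two copies of `ℂ^d ⊗ ℂ^d`.
-/

open scoped Matrix Kronecker

open Matrix

lemma norm_sum_sq_le_card_mul {ι E : Type*} [Fintype ι] [SeminormedAddCommGroup E] (z : ι → E) :
    ‖∑ i, z i‖ ^ 2 ≤ Fintype.card ι * ∑ i, ‖z i‖ ^ 2 := by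
  calc ‖∑ i, z i‖ ^ 2 ≤ (∑ i, ‖z i‖) ^ 2 := by gcongr; exact norm_sum_le _ _
    _ ≤ Fintype.card ι * ∑ i, ‖z i‖ ^ 2 := by
      simpa using sq_sum_le_card_mul_sum_sq (s := Finset.univ) (f := fun i => ‖z i‖)

section DotProduct

variable {ι : Type*} [Fintype ι]

lemma norm_sq_star_dotProduct_le (ψ η : ι → ℂ) :
    ‖star ψ ⬝ᵥ η‖ ^ 2 ≤ (∑ i, ‖ψ i‖ ^ 2) * ∑ i, ‖η i‖ ^ 2 := by
  have h := norm_inner_le_norm (𝕜 := ℂ) (WithLp.toLp 2 ψ) (WithLp.toLp 2 η)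
  rw [EuclideanSpace.inner_toLp_toLp, dotProduct_comm] at h
  rw [← EuclideanSpace.norm_sq_eq, ← EuclideanSpace.norm_sq_eq, ← mul_pow]
  exact pow_le_pow_left₀ (norm_nonneg _) h 2

lemma re_star_dotProduct_vecMulVec_mulVec (ψ η : ι → ℂ) :
    (star η ⬝ᵥ vecMulVec ψ (star ψ) *ᵥ η).re = ‖star ψ ⬝ᵥ η‖ ^ 2 := by
  rw [vecMulVec_mulVec, op_smul_eq_smul, dotProduct_smul, smul_eq_mul,
    star_dotProduct η ψ, Complex.star_def, Complex.mul_conj']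
  norm_cast

lemma star_smul_dotProduct_mulVec_smul (p : Matrix ι ι ℂ) (η : ι → ℂ) (t : ℝ) :
    star ((t : ℂ) • η) ⬝ᵥ p *ᵥ ((t : ℂ) • η) = (t ^ 2 : ℝ) * (star η ⬝ᵥ p *ᵥ η) := by
  rw [star_smul, mulVec_smul, smul_dotProduct, dotProduct_smul, Complex.star_def,
    Complex.conj_ofReal, smul_smul, smul_eq_mul]
  push_cast; ring

end DotProduct

section Kronecker

variable {R l m : Type*} [Fintype l] [Fintype m] [Semiring R]

lemma one_kronecker_mulVec_apply [DecidableEq l] (P : Matrix m m R) (χ : l × m → R)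
    (r : l) (s : m) :
    ((1 : Matrix l l R) ⊗ₖ P *ᵥ χ) (r, s) = (P *ᵥ fun s' => χ (r, s')) s := by
  simp [mulVec, dotProduct, Fintype.sum_prod_type, one_apply, ite_mul]

lemma kronecker_one_mulVec_apply [DecidableEq m] (P : Matrix l l R) (χ : l × m → R)
    (r : l) (s : m) :
    (P ⊗ₖ (1 : Matrix m m R) *ᵥ χ) (r, s) = (P *ᵥ fun r' => χ (r', s)) r := by
  simp [mulVec, dotProduct, Fintype.sum_prod_type, one_apply]

variable [Star R]

lemma star_dotProduct_one_kronecker_mulVec [DecidableEq l] (P : Matrix m m R) (χ : l × m → R) :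
    star χ ⬝ᵥ ((1 : Matrix l l R) ⊗ₖ P *ᵥ χ) =
      ∑ r, star (fun s => χ (r, s)) ⬝ᵥ (P *ᵥ fun s => χ (r, s)) := by
  simp only [dotProduct, Fintype.sum_prod_type, one_kronecker_mulVec_apply, Pi.star_apply]

lemma star_dotProduct_kronecker_one_mulVec [DecidableEq m] (P : Matrix l l R) (χ : l × m → R) :
    star χ ⬝ᵥ (P ⊗ₖ (1 : Matrix m m R) *ᵥ χ) =
      ∑ s, star (fun r => χ (r, s)) ⬝ᵥ (P *ᵥ fun r => χ (r, s)) := by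
  simp only [dotProduct, Fintype.sum_prod_type, kronecker_one_mulVec_apply, Pi.star_apply]
  exact Finset.sum_comm

end Kronecker

lemma re_star_dotProduct_one_kronecker_add_kronecker_one_mulVec {m : Type*} [Fintype m]
    [DecidableEq m] (ψ : m → ℂ) (χ : m × m → ℂ) :
    (star χ ⬝ᵥ ((1 : Matrix m m ℂ) ⊗ₖ vecMulVec ψ (star ψ) +
        vecMulVec ψ (star ψ) ⊗ₖ (1 : Matrix m m ℂ)) *ᵥ χ).re =
      ∑ r, ‖star ψ ⬝ᵥ fun s => χ (r, s)‖ ^ 2 + ∑ s, ‖star ψ ⬝ᵥ fun r => χ (r, s)‖ ^ 2 := by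
  rw [add_mulVec, dotProduct_add, star_dotProduct_one_kronecker_mulVec,
    star_dotProduct_kronecker_one_mulVec, Complex.add_re, Complex.re_sum, Complex.re_sum]
  simp only [re_star_dotProduct_vecMulVec_mulVec]

lemma Matrix.exists_normalized_rank_decomposition {α β : Type*} [Fintype α] [Fintype β]
    (X : Matrix α β ℂ) :
    ∃ (u : Fin X.rank → α → ℂ) (c : Fin X.rank → β → ℂ),
      (∀ t, ∑ i, ‖u t i‖ ^ 2 = 1) ∧ ∑ t, ∑ j, ‖c t j‖ ^ 2 = ∑ i, ∑ j, ‖X i j‖ ^ 2 ∧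
      ∀ i j, X i j = ∑ t, u t i * c t j := by
  let col : β → EuclideanSpace ℂ α := fun j => WithLp.toLp 2 (X.col j)
  let V : Submodule ℂ (EuclideanSpace ℂ α) := Submodule.span ℂ (Set.range col)
  have hrank : Module.finrank ℂ V = X.rank := by
    rw [rank_eq_finrank_span_cols,
      ← LinearEquiv.finrank_map_eq (WithLp.linearEquiv 2 ℂ (α → ℂ)).symm,
      Submodule.map_span, ← Set.range_comp]
    rfl
  let b : OrthonormalBasis (Fin X.rank) ℂ V :=
    (stdOrthonormalBasis ℂ V).reindex (finCongr hrank)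
  let w : β → V := fun j => ⟨col j, Submodule.subset_span (Set.mem_range_self j)⟩
  refine ⟨fun t => b t, fun t j => b.repr (w j) t, fun t => ?_, ?_, fun i j => ?_⟩
  · rw [← EuclideanSpace.norm_sq_eq, Submodule.norm_coe, b.norm_eq_one, one_pow]
  · simp_rw [b.repr_apply_apply]
    rw [Finset.sum_comm, Finset.sum_comm (γ := α)]
    exact Finset.sum_congr rfl fun j _ => by
      rw [b.sum_sq_norm_inner_right]; exact EuclideanSpace.norm_sq_eq (col j)
  · calc X i j = (w j : EuclideanSpace ℂ α) i := rfl
      _ = _ := by rw [← b.sum_repr (w j)]; simp [mul_comm]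

lemma sum_norm_sq_star_dotProduct_le_rank_mul {α₁ α₂ β₁ β₂ : Type*} [Fintype α₁] [Fintype α₂]
    [Fintype β₁] [Fintype β₂] (ψ : β₁ × β₂ → ℂ) (c : ℝ)
    (hprod : ∀ (a : β₁ → ℂ) (b : β₂ → ℂ),
      ‖star ψ ⬝ᵥ fun s => a s.1 * b s.2‖ ^ 2 ≤ c * ((∑ i, ‖a i‖ ^ 2) * ∑ j, ‖b j‖ ^ 2))
    (X : Matrix (α₁ × β₁) (α₂ × β₂) ℂ) :
    ∑ r : α₁ × α₂, ‖star ψ ⬝ᵥ fun s => X (r.1, s.1) (r.2, s.2)‖ ^ 2 ≤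
      X.rank * c * ∑ i, ∑ j, ‖X i j‖ ^ 2 := by
  obtain ⟨u, v, hu, hv, hX⟩ := X.exists_normalized_rank_decomposition
  have hsplit : ∀ r : α₁ × α₂, (star ψ ⬝ᵥ fun s => X (r.1, s.1) (r.2, s.2)) =
      ∑ t, star ψ ⬝ᵥ fun s => u t (r.1, s.1) * v t (r.2, s.2) := by
    intro r
    simp only [hX, dotProduct, Finset.mul_sum]
    exact Finset.sum_comm
  calc ∑ r : α₁ × α₂, ‖star ψ ⬝ᵥ fun s => X (r.1, s.1) (r.2, s.2)‖ ^ 2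
      ≤ ∑ r : α₁ × α₂, X.rank *
          ∑ t, ‖star ψ ⬝ᵥ fun s => u t (r.1, s.1) * v t (r.2, s.2)‖ ^ 2 := by
        gcongr with r
        rw [hsplit r]
        simpa using norm_sum_sq_le_card_mul
          fun t => star ψ ⬝ᵥ fun s => u t (r.1, s.1) * v t (r.2, s.2)
    _ ≤ ∑ r : α₁ × α₂, X.rank *
          ∑ t, c * ((∑ k, ‖u t (r.1, k)‖ ^ 2) * ∑ l, ‖v t (r.2, l)‖ ^ 2) := by
        gcongr with r _ t
        exact hprod (fun k => u t (r.1, k)) (fun l => v t (r.2, l))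
    _ = X.rank * c * ∑ t, ∑ r : α₁ × α₂,
          (∑ k, ‖u t (r.1, k)‖ ^ 2) * ∑ l, ‖v t (r.2, l)‖ ^ 2 := by
        simp only [Finset.mul_sum, mul_assoc]
        exact Finset.sum_comm
    _ = X.rank * c * ∑ t, (∑ i, ‖u t i‖ ^ 2) * ∑ j, ‖v t j‖ ^ 2 := by
        simp only [Fintype.sum_prod_type, Fintype.sum_mul_sum]
    _ = X.rank * c * ∑ i, ∑ j, ‖X i j‖ ^ 2 := by
        rw [← hv]
        simp only [hu, one_mul]

/-- `sSup (productStateValues p)` is `‖p‖_{S(1)}`. -/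
def productStateValues {β₁ β₂ : Type*} [Fintype β₁] [Fintype β₂]
    (p : Matrix (β₁ × β₂) (β₁ × β₂) ℂ) : Set ℝ :=
  {x | ∃ η : β₁ × β₂ → ℂ, (∑ q, ‖η q‖ ^ 2 = 1) ∧ (Matrix.of fun i j => η (i, j)).rank ≤ 1 ∧
    x = (star η ⬝ᵥ (p.mulVec η)).re}

lemma re_star_dotProduct_mulVec_le_sSup_mul {β₁ β₂ : Type*} [Fintype β₁] [Fintype β₂]
    (p : Matrix (β₁ × β₂) (β₁ × β₂) ℂ) (hp : BddAbove (productStateValues p))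
    (η : β₁ × β₂ → ℂ) (hη : (Matrix.of fun i j => η (i, j)).rank ≤ 1) :
    (star η ⬝ᵥ p *ᵥ η).re ≤ sSup (productStateValues p) * ∑ q, ‖η q‖ ^ 2 := by
  set N := ∑ q, ‖η q‖ ^ 2
  rcases (show 0 ≤ N by positivity).eq_or_lt with hN | hN
  · have : η = 0 := funext fun q => by
      simpa using (Finset.sum_eq_zero_iff_of_nonneg (fun q _ => sq_nonneg ‖η q‖)).1 hN.symm q
    simp [this, ← hN]
  set t := (√N)⁻¹
  have ht : t ^ 2 * N = 1 := by
    rw [inv_pow, Real.sq_sqrt hN.le, inv_mul_cancel₀ hN.ne']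
  have hmem : (star ((t : ℂ) • η) ⬝ᵥ p *ᵥ ((t : ℂ) • η)).re ∈ productStateValues p := by
    refine ⟨(t : ℂ) • η, ?_, ?_, rfl⟩
    · simp only [Pi.smul_apply, smul_eq_mul, norm_mul, mul_pow, ← Finset.mul_sum,
        Complex.norm_real, Real.norm_eq_abs, sq_abs]
      exact ht
    · have ht0 : (t : ℂ) ≠ 0 := by simp [t, (Real.sqrt_pos.2 hN).ne']
      rwa [show (of fun i j => ((t : ℂ) • η) (i, j)) = (t : ℂ) • of fun i j => η (i, j) from rfl,
        rank_smul_of_mem_nonZeroDivisors _ (mem_nonZeroDivisors_of_ne_zero ht0)]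
  have hle := le_csSup hp hmem
  rw [star_smul_dotProduct_mulVec_smul, Complex.re_ofReal_mul] at hle
  calc (star η ⬝ᵥ p *ᵥ η).re = N * (t ^ 2 * (star η ⬝ᵥ p *ᵥ η).re) := by
        rw [← mul_assoc, mul_comm N, ht, one_mul]
    _ ≤ N * sSup (productStateValues p) := by gcongr
    _ = sSup (productStateValues p) * N := mul_comm _ _

lemma bddAbove_productStateValues_vecMulVec {β₁ β₂ : Type*} [Fintype β₁] [Fintype β₂]
    (ψ : β₁ × β₂ → ℂ) : BddAbove (productStateValues (vecMulVec ψ (star ψ))) := by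
  refine ⟨∑ q, ‖ψ q‖ ^ 2, ?_⟩
  rintro _ ⟨η, hη, -, rfl⟩
  rw [re_star_dotProduct_vecMulVec_mulVec]
  simpa [hη] using norm_sq_star_dotProduct_le ψ η

lemma norm_sq_star_dotProduct_prod_le {β₁ β₂ : Type*} [Fintype β₁] [Fintype β₂]
    (ψ : β₁ × β₂ → ℂ) (a : β₁ → ℂ) (b : β₂ → ℂ) :
    ‖star ψ ⬝ᵥ fun s => a s.1 * b s.2‖ ^ 2 ≤
      sSup (productStateValues (vecMulVec ψ (star ψ))) * ((∑ i, ‖a i‖ ^ 2) * ∑ j, ‖b j‖ ^ 2) := by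
  have h := re_star_dotProduct_mulVec_le_sSup_mul _ (bddAbove_productStateValues_vecMulVec ψ)
    (fun s => a s.1 * b s.2) (rank_vecMulVec_le a b)
  simpa only [re_star_dotProduct_vecMulVec_mulVec, norm_mul, mul_pow, Fintype.sum_prod_type,
    Fintype.sum_mul_sum] using h

theorem schmidt_two_opNorm_le_general {d : ℕ} (ψ : Fin d × Fin d → ℂ)
    (p : Matrix (Fin d × Fin d) (Fin d × Fin d) ℂ)
    (hp : p = Matrix.vecMulVec ψ (star ψ)) :
    sSup {x : ℝ | ∃ χ : (Fin d × Fin d) × (Fin d × Fin d) → ℂ,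
        (∑ q, ‖χ q‖ ^ 2 = 1) ∧
        (Matrix.of fun a b : Fin d × Fin d => χ ((a.1, b.1), (a.2, b.2))).rank ≤ 2 ∧
        x = (star χ ⬝ᵥ (((1 : Matrix (Fin d × Fin d) (Fin d × Fin d) ℂ) ⊗ₖ p
              + p ⊗ₖ (1 : Matrix (Fin d × Fin d) (Fin d × Fin d) ℂ)).mulVec χ)).re}
      ≤ 4 * sSup {x : ℝ | ∃ η : Fin d × Fin d → ℂ,
        (∑ q, ‖η q‖ ^ 2 = 1) ∧
        (Matrix.of fun i j : Fin d => η (i, j)).rank ≤ 1 ∧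
        x = (star η ⬝ᵥ (p.mulVec η)).re} := by
  change _ ≤ 4 * sSup (productStateValues p)
  subst hp
  set c := sSup (productStateValues (vecMulVec ψ (star ψ)))
  have hc : 0 ≤ c := Real.sSup_nonneg <| by
    rintro _ ⟨η, -, -, rfl⟩
    rw [re_star_dotProduct_vecMulVec_mulVec]
    positivity
  refine Real.sSup_le ?_ (by positivity)
  rintro _ ⟨χ, hχ, hrank, rfl⟩
  set X := of fun a b : Fin d × Fin d => χ ((a.1, b.1), (a.2, b.2))
  have hX : ∑ i, ∑ j, ‖X i j‖ ^ 2 = 1 := by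
    rw [← hχ, ← Fintype.sum_prod_type']
    exact Fintype.sum_equiv (Equiv.prodProdProdComm _ _ _ _) _ _ fun _ => rfl
  have h₁ := sum_norm_sq_star_dotProduct_le_rank_mul ψ c (norm_sq_star_dotProduct_prod_le ψ) X
  have h₂ := sum_norm_sq_star_dotProduct_le_rank_mul ψ c (norm_sq_star_dotProduct_prod_le ψ)
    (X.submatrix (Equiv.prodComm _ _) (Equiv.prodComm _ _))
  have hX' : ∑ i, ∑ j, ‖X.submatrix (Equiv.prodComm _ _) (Equiv.prodComm _ _) i j‖ ^ 2 = 1 := by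
    rw [← hX]
    exact Fintype.sum_equiv _ _ _ fun i => Fintype.sum_equiv _ _ _ fun j => rfl
  rw [hX, mul_one] at h₁
  rw [hX', mul_one, rank_submatrix] at h₂
  have hrank' : (X.rank : ℝ) ≤ 2 := by exact_mod_cast hrank
  rw [re_star_dotProduct_one_kronecker_add_kronecker_one_mulVec]
  calc _ ≤ X.rank * c + X.rank * c := add_le_add h₁ h₂
    _ ≤ 4 * c := by nlinarith

/-- For a unit vector `ψ ∈ ℂ^d ⊗ ℂ^d` with `p = |ψ⟩⟨ψ|`, the Schmidt-2 operator norm bound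
`‖1 ⊗ p + p ⊗ 1‖_{S(2)} ≤ 4 ‖p‖_{S(1)}`.  Here `‖A‖_{S(k)}` is the supremum of `⟨χ, A χ⟩`
over unit vectors `χ` of Schmidt rank `≤ k`, the Schmidt rank being taken with respect to
the bipartition grouping the first tensor factors together and the second ones together. -/
theorem schmidt_two_opNorm_le {d : ℕ} (ψ : Fin d × Fin d → ℂ)
    (hψ : ∑ q : Fin d × Fin d, ‖ψ q‖ ^ 2 = 1)
    (p : Matrix (Fin d × Fin d) (Fin d × Fin d) ℂ)
    (hp : p = Matrix.vecMulVec ψ (star ψ)) :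
    sSup {x : ℝ | ∃ χ : (Fin d × Fin d) × (Fin d × Fin d) → ℂ,
        (∑ q, ‖χ q‖ ^ 2 = 1) ∧
        (Matrix.of fun a b : Fin d × Fin d => χ ((a.1, b.1), (a.2, b.2))).rank ≤ 2 ∧
        x = (star χ ⬝ᵥ (((1 : Matrix (Fin d × Fin d) (Fin d × Fin d) ℂ) ⊗ₖ p
              + p ⊗ₖ (1 : Matrix (Fin d × Fin d) (Fin d × Fin d) ℂ)).mulVec χ)).re}
      ≤ 4 * sSup {x : ℝ | ∃ η : Fin d × Fin d → ℂ,
        (∑ q, ‖η q‖ ^ 2 = 1) ∧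
        (Matrix.of fun i j : Fin d => η (i, j)).rank ≤ 1 ∧
        x = (star η ⬝ᵥ (p.mulVec η)).re} :=
  schmidt_two_opNorm_le_general ψ p hp
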